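/- Factorization lower bound for the nuclear norm: for any real matrices C ∈ ℝ^{M×P} and B ∈ ℝ^{N×P}, the matrix A = C Bᵀ satisfies ‖A‖_* ≤ (1/2)(‖B‖_F² + ‖C‖_F²). -/

import Mathlib

/-!
Let `σᵢ` be the singular values of `A = C Bᵀ`, with orthonormal right singular vectors `vᵢ` and,
for `σᵢ ≠ 0`, orthonormal left singular vectors `uᵢ = A vᵢ / σᵢ`. Then
`σᵢ = ⟨uᵢ, A vᵢ⟩ = ⟨Cᵀ uᵢ, Bᵀ vᵢ⟩ ≤ (‖Cᵀ uᵢ‖² + ‖Bᵀ vᵢ‖²) / 2`, and summing over `i`, Bessel's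
inequality applied to each column of `B` and of `C` bounds `∑ ‖Bᵀ vᵢ‖²` by `‖B‖_F²` and
`∑ ‖Cᵀ uᵢ‖²` by `‖C‖_F²`.
-/

open Matrix

/-- Squared Frobenius norm of a real matrix: `∑_{i,j} M_{ij}²`. -/
def frobSq {m n : ℕ} (X : Matrix (Fin m) (Fin n) ℝ) : ℝ :=
  ∑ i, ∑ j, (X i j) ^ 2

/-- Nuclear norm of a real matrix: the trace of the positive semidefinite
square root of `AᴴA = AᵀA` (i.e., the sum of singular values of `A`). -/
noncomputable def nuclearNorm {m n : ℕ} (A : Matrix (Fin m) (Fin n) ℝ) : ℝ :=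
  ((Matrix.posSemidef_conjTranspose_mul_self A).1.eigenvectorUnitary.1 *
    diagonal ((RCLike.ofReal : ℝ → ℝ) ∘ (√·) ∘ (Matrix.posSemidef_conjTranspose_mul_self A).1.eigenvalues) *
    (star (Matrix.posSemidef_conjTranspose_mul_self A).1.eigenvectorUnitary : Matrix (Fin n) (Fin n) ℝ)).trace

theorem Orthonormal.sum_dotProduct_sq_le {ι n : Type*} [Fintype ι] [Fintype n]
    {v : ι → EuclideanSpace ℝ n} (hv : Orthonormal ℝ v) (x : n → ℝ) :
    ∑ i, (x ⬝ᵥ v i) ^ 2 ≤ ∑ k, x k ^ 2 := by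
  simpa [EuclideanSpace.norm_sq_eq, EuclideanSpace.inner_eq_star_dotProduct] using
    hv.sum_inner_products_le (x := WithLp.toLp 2 x) (s := Finset.univ)

theorem dotProduct_le_half_add {n : Type*} [Fintype n] (x y : n → ℝ) :
    x ⬝ᵥ y ≤ (1 / 2) * (∑ k, x k ^ 2 + ∑ k, y k ^ 2) := by
  simp only [dotProduct, ← Finset.sum_add_distrib, Finset.mul_sum]
  exact Finset.sum_le_sum fun k _ => by nlinarith [sq_nonneg (x k - y k)]

theorem Orthonormal.sum_sq_transpose_mulVec_le {ι : Type*} [Fintype ι] {m n : ℕ}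
    (X : Matrix (Fin m) (Fin n) ℝ) {v : ι → EuclideanSpace ℝ (Fin m)} (hv : Orthonormal ℝ v) :
    ∑ i, ∑ p, (Xᵀ *ᵥ v i) p ^ 2 ≤ frobSq X := by
  calc ∑ i, ∑ p, (Xᵀ *ᵥ v i) p ^ 2 = ∑ p, ∑ i, (Xᵀ p ⬝ᵥ v i) ^ 2 := Finset.sum_comm
    _ ≤ ∑ p, ∑ k, Xᵀ p k ^ 2 := Finset.sum_le_sum fun p _ => hv.sum_dotProduct_sq_le (Xᵀ p)
    _ = frobSq X := Finset.sum_comm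

theorem sum_dotProduct_mul_transpose_mulVec_le {ι : Type*} [Fintype ι] {M N P : ℕ}
    (C : Matrix (Fin M) (Fin P) ℝ) (B : Matrix (Fin N) (Fin P) ℝ)
    {u : ι → EuclideanSpace ℝ (Fin M)} {v : ι → EuclideanSpace ℝ (Fin N)}
    (hu : Orthonormal ℝ u) (hv : Orthonormal ℝ v) :
    ∑ i, u i ⬝ᵥ ((C * Bᵀ) *ᵥ v i) ≤ (1 / 2) * (frobSq B + frobSq C) := by
  have factor : ∀ i, u i ⬝ᵥ ((C * Bᵀ) *ᵥ v i) = (Cᵀ *ᵥ u i) ⬝ᵥ (Bᵀ *ᵥ v i) := fun i => by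
    rw [← mulVec_mulVec, dotProduct_mulVec, ← mulVec_transpose]
  calc ∑ i, u i ⬝ᵥ ((C * Bᵀ) *ᵥ v i)
      ≤ ∑ i, (1 / 2) * (∑ p, (Cᵀ *ᵥ u i) p ^ 2 + ∑ p, (Bᵀ *ᵥ v i) p ^ 2) :=
        Finset.sum_le_sum fun i _ => factor i ▸ dotProduct_le_half_add _ _
    _ = (1 / 2) * (∑ i, ∑ p, (Cᵀ *ᵥ u i) p ^ 2 + ∑ i, ∑ p, (Bᵀ *ᵥ v i) p ^ 2) := by
        rw [← Finset.mul_sum, Finset.sum_add_distrib]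
    _ ≤ (1 / 2) * (frobSq C + frobSq B) := by
        gcongr
        exacts [hu.sum_sq_transpose_mulVec_le C, hv.sum_sq_transpose_mulVec_le B]
    _ = (1 / 2) * (frobSq B + frobSq C) := by rw [add_comm]

namespace Matrix

variable {m n : Type*} [Fintype m] [Fintype n] [DecidableEq n] (A : Matrix m n ℝ)

noncomputable def rightSingularVector (i : n) : EuclideanSpace ℝ n :=
  (posSemidef_conjTranspose_mul_self A).1.eigenvectorBasis i

noncomputable def singularValue (i : n) : ℝ :=
  √((posSemidef_conjTranspose_mul_self A).1.eigenvalues i)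

/-- This is `0` when `σᵢ = 0` (as `0⁻¹ = 0`), so `⟨uᵢ, A vᵢ⟩ = σᵢ` holds for every `i`. -/
noncomputable def leftSingularVector (i : n) : EuclideanSpace ℝ m :=
  (A.singularValue i)⁻¹ • WithLp.toLp 2 (A *ᵥ A.rightSingularVector i)

theorem orthonormal_rightSingularVector : Orthonormal ℝ A.rightSingularVector :=
  (posSemidef_conjTranspose_mul_self A).1.eigenvectorBasis.orthonormal

theorem mulVec_rightSingularVector_dotProduct (i j : n) :
    (A *ᵥ A.rightSingularVector i) ⬝ᵥ (A *ᵥ A.rightSingularVector j) =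
      if i = j then A.singularValue i ^ 2 else 0 := by
  have hG := posSemidef_conjTranspose_mul_self A
  have hv := orthonormal_iff_ite.mp A.orthonormal_rightSingularVector j i
  have eigen : (Aᴴ * A) *ᵥ A.rightSingularVector i =
      hG.1.eigenvalues i • A.rightSingularVector i :=
    hG.1.mulVec_eigenvectorBasis i
  rw [EuclideanSpace.inner_eq_star_dotProduct, star_trivial] at hv
  rw [dotProduct_mulVec, ← mulVec_transpose, mulVec_mulVec, ← conjTranspose_eq_transpose_of_trivial,
    eigen, smul_dotProduct, hv, singularValue, Real.sq_sqrt (hG.eigenvalues_nonneg i)]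
  simp [eq_comm]

theorem leftSingularVector_dotProduct_mulVec (i : n) :
    A.leftSingularVector i ⬝ᵥ (A *ᵥ A.rightSingularVector i) = A.singularValue i := by
  rw [leftSingularVector, WithLp.ofLp_smul, smul_dotProduct, WithLp.ofLp_toLp,
    mulVec_rightSingularVector_dotProduct, if_pos rfl, smul_eq_mul, ← div_eq_inv_mul, sq,
    mul_self_div_self]

theorem orthonormal_leftSingularVector :
    Orthonormal ℝ fun i : {i // A.singularValue i ≠ 0} => A.leftSingularVector i := by
  rw [orthonormal_iff_ite]
  rintro ⟨i, hi⟩ ⟨j, hj⟩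
  simp only [EuclideanSpace.inner_eq_star_dotProduct, star_trivial, leftSingularVector,
    WithLp.ofLp_smul, smul_dotProduct, dotProduct_smul, mulVec_rightSingularVector_dotProduct,
    Subtype.mk.injEq, smul_eq_mul]
  by_cases hij : i = j
  · subst hij
    rw [if_pos rfl, if_pos rfl]
    field_simp
  · simp [hij, Ne.symm hij]

theorem nuclearNorm_eq_sum_singularValue {m n : ℕ} (A : Matrix (Fin m) (Fin n) ℝ) :
    nuclearNorm A = ∑ i, A.singularValue i := by
  rw [nuclearNorm, trace_mul_cycle, Unitary.coe_star_mul_self, one_mul, trace_diagonal]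
  rfl

end Matrix

theorem nuclearNorm_le_half_frobSq (M N P : ℕ)
    (C : Matrix (Fin M) (Fin P) ℝ) (B : Matrix (Fin N) (Fin P) ℝ) :
    nuclearNorm (C * Bᵀ) ≤ (1 / 2) * (frobSq B + frobSq C) := by
  set A := C * Bᵀ
  calc nuclearNorm A = ∑ i, A.singularValue i := A.nuclearNorm_eq_sum_singularValue
    _ = ∑ i : {i // A.singularValue i ≠ 0}, A.singularValue i := by
        rw [← Finset.sum_filter_ne_zero]
        exact Finset.sum_subtype _ (by simp) _
    _ = ∑ i : {i // A.singularValue i ≠ 0},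
          A.leftSingularVector i ⬝ᵥ (A *ᵥ A.rightSingularVector i) := by
        simp only [leftSingularVector_dotProduct_mulVec]
    _ ≤ (1 / 2) * (frobSq B + frobSq C) :=
        sum_dotProduct_mul_transpose_mulVec_le C B A.orthonormal_leftSingularVector
          (A.orthonormal_rightSingularVector.comp _ Subtype.val_injective)
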